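/- For a free ultrafilter 𝒰 on an infinite set X, the following are equivalent: (i) 𝒰 is selective; (ii) for every ultrametric d on X with scale d(X,X) = {0,1,2}, the ultrafilter 𝒰 is metrically Ramsey on (X,d). -/

import Mathlib

/-- `d` is an ultrametric on `X`. -/
def IsUltrametric {X : Type*} (d : X → X → ℝ) : Prop :=
  (∀ x y : X, d x y = 0 ↔ x = y) ∧ (∀ x y : X, d x y = d y x) ∧
  (∀ x y z : X, d x z ≤ max (d x y) (d y z))

/-- An ultrafilter is free if it is not principal. -/
def IsFreeUltrafilter {X : Type*} (𝒰 : Ultrafilter X) : Prop :=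
  ∀ x : X, 𝒰 ≠ pure x

/-- `𝒰` is metrically Ramsey with respect to the distance function `d`:
every coloring of pairs depending only on `d` has a monochrome member. -/
def MetricallyRamseyFor {X : Type*} (d : X → X → ℝ) (𝒰 : Ultrafilter X) : Prop :=
  ∀ χ : X → X → Bool, (∀ x y z t : X, d x y = d z t → χ x y = χ z t) →
    ∃ U ∈ 𝒰, ∃ k : Bool, ∀ x ∈ U, ∀ y ∈ U, x ≠ y → χ x y = k

/-- A free ultrafilter is selective if for every partition either a cell belongs
to it, or it has a member meeting every cell in at most one point. -/
def IsSelective {X : Type*} (𝒰 : Ultrafilter X) : Prop :=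
  ∀ Pp : Set (Set X), Setoid.IsPartition Pp →
    (∃ P ∈ Pp, P ∈ 𝒰) ∨ ∃ U ∈ 𝒰, ∀ P ∈ Pp, (U ∩ P).Subsingleton

/-!
A partition of `X` and the ultrametric "`0` on the diagonal, `1` inside a cell, `2` across cells"
carry the same information: the cells are the closed balls of radius `1`. For a coloring of pairs
depending only on the distance, a member of `𝒰` inside one cell is monochrome (all its distances
are `1`) and so is a member of `𝒰` meeting each cell at most once (all its distances are `2`).
Conversely, coloring a pair by whether its distance is `2` turns a monochrome member of `𝒰` into
one of these two kinds of sets.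
-/

namespace Ultrafilter

variable {X : Type*}

/-- Selectivity of `𝒰` for the partition of `X` into the classes of `s`. -/
def IsSelectiveFor (s : Setoid X) (𝒰 : Ultrafilter X) : Prop :=
  (∃ U ∈ 𝒰, ∀ x ∈ U, ∀ y ∈ U, s x y) ∨ ∃ U ∈ 𝒰, ∀ x ∈ U, ∀ y ∈ U, s x y → x = y

theorem isSelectiveFor_iff_classes (s : Setoid X) (𝒰 : Ultrafilter X) :
    IsSelectiveFor s 𝒰 ↔
      (∃ P ∈ s.classes, P ∈ 𝒰) ∨ ∃ U ∈ 𝒰, ∀ P ∈ s.classes, (U ∩ P).Subsingleton := by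
  refine or_congr ⟨?_, ?_⟩ ⟨?_, ?_⟩
  · rintro ⟨U, hU, hsU⟩
    obtain ⟨x, hx⟩ := 𝒰.nonempty_of_mem hU
    exact ⟨_, s.mem_classes x, 𝒰.mem_of_superset hU fun y hy => hsU y hy x hx⟩
  · rintro ⟨_, ⟨z, rfl⟩, hP⟩
    exact ⟨_, hP, fun x hx y hy => s.trans hx (s.symm hy)⟩
  · rintro ⟨U, hU, hinj⟩
    refine ⟨U, hU, ?_⟩
    rintro _ ⟨z, rfl⟩ x ⟨hxU, hx⟩ y ⟨hyU, hy⟩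
    exact hinj x hxU y hyU (s.trans hx (s.symm hy))
  · rintro ⟨U, hU, hsub⟩
    exact ⟨U, hU, fun x hx y hy hxy => hsub _ (s.mem_classes y) ⟨hx, hxy⟩ ⟨hy, s.refl y⟩⟩

theorem isSelective_iff_forall_isSelectiveFor (𝒰 : Ultrafilter X) :
    IsSelective 𝒰 ↔ ∀ s : Setoid X, IsSelectiveFor s 𝒰 := by
  simp only [isSelectiveFor_iff_classes]
  refine ⟨fun hsel s => hsel _ s.isPartition_classes, fun hsel Pp hPp => ?_⟩
  rw [← Setoid.classes_mkClasses Pp hPp]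
  exact hsel _

end Ultrafilter

def IsIsometricColoring {X : Type*} (d : X → X → ℝ) (χ : X → X → Bool) : Prop :=
  ∀ x y z t : X, d x y = d z t → χ x y = χ z t

theorem IsIsometricColoring.exists_monochrome_of_forall_dist_eq {X : Type*} {d : X → X → ℝ}
    {χ : X → X → Bool} (hχ : IsIsometricColoring d χ) {U : Set X} {r : ℝ}
    (hU : ∀ x ∈ U, ∀ y ∈ U, x ≠ y → d x y = r) :
    ∃ k : Bool, ∀ x ∈ U, ∀ y ∈ U, x ≠ y → χ x y = k := by
  by_cases hpair : ∃ x ∈ U, ∃ y ∈ U, x ≠ y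
  · obtain ⟨x₀, hx₀, y₀, hy₀, hne⟩ := hpair
    exact ⟨χ x₀ y₀, fun x hx y hy hxy =>
      hχ x y x₀ y₀ ((hU x hx y hy hxy).trans (hU x₀ hx₀ y₀ hy₀ hne).symm)⟩
  · push Not at hpair
    exact ⟨true, fun x hx y hy hxy => absurd (hpair x hx y hy) hxy⟩

namespace IsUltrametric

variable {X : Type*} {d : X → X → ℝ}

def ballSetoid (hd : IsUltrametric d) (r : ℝ) (hr : 0 ≤ r) : Setoid X where
  r x y := d x y ≤ r
  iseqv :=
    { refl := fun x => ((hd.1 x x).2 rfl).symm ▸ hr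
      symm := fun {x y} h => hd.2.1 x y ▸ h
      trans := fun {x y z} hxy hyz => (hd.2.2 x y z).trans (max_le hxy hyz) }

theorem metricallyRamseyFor_of_isSelectiveFor (hd : IsUltrametric d)
    (hscale : ∀ x y, d x y = 0 ∨ d x y = 1 ∨ d x y = 2) {𝒰 : Ultrafilter X}
    (hsel : 𝒰.IsSelectiveFor (hd.ballSetoid 1 zero_le_one)) :
    MetricallyRamseyFor d 𝒰 := by
  intro χ hχ
  have hpos : ∀ x y, x ≠ y → d x y ≠ 0 := fun x y hxy h => hxy ((hd.1 x y).1 h)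
  rcases hsel with ⟨U, hU, hball⟩ | ⟨U, hU, hinj⟩
  · refine ⟨U, hU, IsIsometricColoring.exists_monochrome_of_forall_dist_eq (r := 1) hχ ?_⟩
    intro x hx y hy hxy
    have hle : d x y ≤ 1 := hball x hx y hy
    rcases hscale x y with h | h | h
    · exact absurd h (hpos x y hxy)
    · exact h
    · linarith
  · refine ⟨U, hU, IsIsometricColoring.exists_monochrome_of_forall_dist_eq (r := 2) hχ ?_⟩
    intro x hx y hy hxy
    have hgt : ¬ d x y ≤ 1 := fun h => hxy (hinj x hx y hy h)
    rcases hscale x y with h | h | h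
    · exact absurd h (hpos x y hxy)
    · exact absurd h.le hgt
    · exact h

end IsUltrametric

namespace Setoid

variable {X : Type*} (s : Setoid X)

open Classical in
noncomputable def partitionDist (x y : X) : ℝ :=
  if x = y then 0 else if s x y then 1 else 2

variable {s}

theorem partitionDist_eq_two_iff {x y : X} : s.partitionDist x y = 2 ↔ ¬ s x y := by
  by_cases hxy : x = y
  · subst hxy
    simp [partitionDist]
  · by_cases h : s x y <;> simp [partitionDist, hxy, h]

theorem partitionDist_nonneg (x y : X) : 0 ≤ s.partitionDist x y := by
  unfold partitionDist
  split_ifs <;> norm_num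

theorem one_le_partitionDist {x y : X} (hxy : x ≠ y) : 1 ≤ s.partitionDist x y := by
  simp only [partitionDist, if_neg hxy]
  split_ifs <;> norm_num

variable (s)

theorem isUltrametric_partitionDist : IsUltrametric s.partitionDist := by
  refine ⟨fun x y => ?_, fun x y => ?_, fun x y z => ?_⟩
  · unfold partitionDist
    split_ifs <;> simp_all
  · rcases eq_or_ne x y with rfl | hxy
    · rfl
    · simp only [partitionDist, if_neg hxy, if_neg hxy.symm]
      classical exact if_congr s.comm' rfl rfl
  · rcases eq_or_ne x z with rfl | hxz
    · simp only [partitionDist, if_true]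
      exact le_max_of_le_left (partitionDist_nonneg x y)
    by_cases hsxz : s x z
    · have hdxz : s.partitionDist x z = 1 := by simp [partitionDist, hxz, hsxz]
      rcases eq_or_ne x y with rfl | hxy
      · exact hdxz ▸ le_max_right _ _
      · exact hdxz ▸ le_max_of_le_left (one_le_partitionDist hxy)
    · have hsplit : ¬ s x y ∨ ¬ s y z := by
        by_contra! h
        exact hsxz (s.trans h.1 h.2)
      rw [partitionDist_eq_two_iff.2 hsxz]
      rcases hsplit with h | h
      · exact le_max_of_le_left (partitionDist_eq_two_iff.2 h).ge
      · exact le_max_of_le_right (partitionDist_eq_two_iff.2 h).ge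

variable {s}

theorem range_partitionDist (hcell : ∃ x y, s x y ∧ x ≠ y) (hcross : ∃ x y, ¬ s x y) :
    (Set.range fun p : X × X => s.partitionDist p.1 p.2) = {0, 1, 2} := by
  obtain ⟨x₁, y₁, hs₁, hne⟩ := hcell
  obtain ⟨x₂, y₂, hs₂⟩ := hcross
  apply Set.Subset.antisymm
  · rintro _ ⟨⟨x, y⟩, rfl⟩
    simp only [partitionDist]
    split_ifs <;> simp
  · rintro _ (rfl | rfl | rfl)
    · exact ⟨(x₁, x₁), by simp [partitionDist]⟩
    · exact ⟨(x₁, y₁), by simp [partitionDist, hne, hs₁]⟩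
    · exact ⟨(x₂, y₂), partitionDist_eq_two_iff.2 hs₂⟩

theorem isSelectiveFor_of_metricallyRamseyFor {𝒰 : Ultrafilter X}
    (hram : MetricallyRamseyFor s.partitionDist 𝒰) : 𝒰.IsSelectiveFor s := by
  obtain ⟨U, hU, k, hk⟩ := hram (fun x y => decide (s.partitionDist x y = 2))
    (fun x y z t h => by simp only [h])
  cases k with
  | false =>
    refine Or.inl ⟨U, hU, fun x hx y hy => ?_⟩
    rcases eq_or_ne x y with rfl | hxy
    · exact s.refl x
    · simpa [partitionDist_eq_two_iff] using hk x hx y hy hxy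
  | true =>
    refine Or.inr ⟨U, hU, fun x hx y hy hsxy => ?_⟩
    by_contra hxy
    simpa [partitionDist_eq_two_iff, hsxy] using hk x hx y hy hxy

end Setoid

theorem stmt12_general {X : Type*} (𝒰 : Ultrafilter X) :
    IsSelective 𝒰 ↔
      ∀ d : X → X → ℝ, IsUltrametric d →
        (Set.range fun p : X × X => d p.1 p.2) = {0, 1, 2} →
        MetricallyRamseyFor d 𝒰 := by
  rw [Ultrafilter.isSelective_iff_forall_isSelectiveFor]
  constructor
  · intro hsel d hd hscale
    refine hd.metricallyRamseyFor_of_isSelectiveFor (fun x y => ?_) (hsel _)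
    simpa using hscale.subset ⟨(x, y), rfl⟩
  · intro hram s
    by_cases htriv : ∀ x y, s x y
    · exact Or.inl ⟨Set.univ, Filter.univ_mem, fun x _ y _ => htriv x y⟩
    by_cases hdisc : ∀ x y, s x y → x = y
    · exact Or.inr ⟨Set.univ, Filter.univ_mem, fun x _ y _ => hdisc x y⟩
    push Not at htriv hdisc
    exact Setoid.isSelectiveFor_of_metricallyRamseyFor
      (hram _ s.isUltrametric_partitionDist (Setoid.range_partitionDist hdisc htriv))

/-- Proposition 2.2: a free ultrafilter on an infinite set is selective iff it is
metrically Ramsey for every ultrametric with scale `{0,1,2}`. -/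
theorem stmt12 {X : Type*} [Infinite X] (𝒰 : Ultrafilter X)
    (hfree : IsFreeUltrafilter 𝒰) :
    IsSelective 𝒰 ↔
      ∀ d : X → X → ℝ, IsUltrametric d →
        (Set.range fun p : X × X => d p.1 p.2) = {0, 1, 2} →
        MetricallyRamseyFor d 𝒰 :=
  stmt12_general 𝒰
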